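/- arXiv:1905.05924 — 2 statements merged into one kernel-verified Lean document; each statement's English description precedes it below -/
import Mathlib

section
/- The set X_{α,θ} = { Σ_{n=1}^∞ δₙ αⁿ : (δₙ) ∈ W_θ } is a closed subset of ℂ. -/
open Complex

/-- e^{iθ} -/
noncomputable def rot (θ : ℝ) : ℂ := Complex.exp (θ * Complex.I)

/-- The digit set Δ_θ = {0, 1, e^{iθ}, …, e^{(p-1)iθ}}. -/
def Delta (θ : ℝ) (p : ℕ) : Set ℂ := insert 0 {z | ∃ k, k < p ∧ z = rot θ ^ k}

/-- Generalized Revolving Condition: each nonzero digit is e^{iθ} times the previous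
nonzero digit. Sequences are indexed from 1; index 0 is a dummy (digit 0). -/
def GRC (θ : ℝ) (δ : ℕ → ℂ) : Prop :=
  ∀ j k : ℕ, j < k → δ j ≠ 0 → δ k ≠ 0 → (∀ m, j < m → m < k → δ m = 0) →
    δ k = rot θ * δ j

/-- Membership in W_θ (with the convention δ 0 = 0, i.e. sequences start at index 1). -/
def Wrev (θ : ℝ) (p : ℕ) (δ : ℕ → ℂ) : Prop :=
  δ 0 = 0 ∧ (∀ n, δ n ∈ Delta θ p) ∧ GRC θ δ

/-- The first nonzero digit of δ is c (or δ is identically zero). -/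
def FirstNonzero (δ : ℕ → ℂ) (c : ℂ) : Prop :=
  (∀ n, δ n = 0) ∨ ∃ j, δ j = c ∧ ∀ m, m < j → δ m = 0

/-- X_c : points from revolving sequences whose first nonzero digit is c. -/
noncomputable def Xc (α : ℂ) (θ : ℝ) (p : ℕ) (c : ℂ) : Set ℂ :=
  {x | ∃ δ : ℕ → ℂ, Wrev θ p δ ∧ FirstNonzero δ c ∧ x = ∑' n, δ n * α ^ n}

/-- X_{α,θ} : points from all revolving sequences. -/
noncomputable def Xfull (α : ℂ) (θ : ℝ) (p : ℕ) : Set ℂ :=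
  {x | ∃ δ : ℕ → ℂ, Wrev θ p δ ∧ x = ∑' n, δ n * α ^ n}

/-!
Since Δ_θ is finite, the digit space `ℕ → Δ_θ` is compact. Each instance of the revolving
condition involves only finitely many digits, so it cuts out a clopen set, and W_θ is closed
in the digit space, hence compact. The map `δ ↦ ∑ δₙ αⁿ` is continuous by uniform convergence
(`|α| < 1`, digits of norm at most 1), so X_{α,θ} is a compact, hence closed, subset of ℂ.
-/

theorem DependsOn.isClopen_setOf {ι : Type*} {X : ι → Type*} [∀ i, TopologicalSpace (X i)]
    [∀ i, DiscreteTopology (X i)] {P : (∀ i, X i) → Prop} {s : Set ι} (hP : DependsOn P s)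
    (hs : s.Finite) : IsClopen {x | P x} := by
  have := hs.to_subtype
  obtain ⟨g, rfl⟩ := dependsOn_iff_exists_comp.mp hP
  exact (isClopen_discrete {y | g y}).preimage (continuous_pi fun i => continuous_apply i.1)

theorem continuous_tsum_coe_mul_pow {𝕜 : Type*} [NormedField 𝕜] [CompleteSpace 𝕜]
    {D : Set 𝕜} {C : ℝ} (hD : ∀ z ∈ D, ‖z‖ ≤ C) {α : 𝕜} (hα : ‖α‖ < 1) :
    Continuous fun δ : ℕ → D => ∑' n, (δ n : 𝕜) * α ^ n := by
  refine continuous_tsum (u := fun n => C * ‖α‖ ^ n) (fun n => by fun_prop)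
    ((summable_geometric_of_lt_one (norm_nonneg α) hα).mul_left C) fun n δ => ?_
  rw [norm_mul, norm_pow]
  exact mul_le_mul_of_nonneg_right (hD _ (δ n).2) (by positivity)

theorem dependsOn_grc_cond (θ : ℝ) (D : Set ℂ) (j k : ℕ) :
    DependsOn (fun δ : ℕ → D => j < k → (δ j : ℂ) ≠ 0 → (δ k : ℂ) ≠ 0 →
      (∀ m, j < m → m < k → (δ m : ℂ) = 0) → (δ k : ℂ) = rot θ * δ j) (Set.Iic k) := by
  intro x y hxy
  by_cases hjk : j < k
  · have e : ∀ m, m ≤ k → x m = y m := hxy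
    simp +contextual [e j hjk.le, e k le_rfl, fun m (hm : m < k) => e m hm.le]
  · simp [hjk]

theorem isClosed_setOf_grc (θ : ℝ) (D : Set ℂ) [DiscreteTopology D] :
    IsClosed {δ : ℕ → D | GRC θ (fun n => (δ n : ℂ))} := by
  convert isClosed_iInter fun j => isClosed_iInter fun k =>
    ((dependsOn_grc_cond θ D j k).isClopen_setOf (Set.finite_Iic k)).isClosed using 1
  ext δ
  simp only [GRC, Set.mem_ofPred_eq, Set.mem_iInter]

theorem Delta_finite (θ : ℝ) (p : ℕ) : (Delta θ p).Finite := by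
  have : Delta θ p = insert 0 ((rot θ ^ ·) '' Set.Iio p) := by
    ext z
    simp [Delta, eq_comm]
  rw [this]
  exact ((Set.finite_Iio p).image _).insert 0

theorem norm_le_one_of_mem_Delta {θ : ℝ} {p : ℕ} {z : ℂ} (hz : z ∈ Delta θ p) : ‖z‖ ≤ 1 := by
  rcases hz with rfl | ⟨k, -, rfl⟩
  · simp
  · simp [rot, norm_exp]

theorem Xfull_eq_image (α : ℂ) (θ : ℝ) (p : ℕ) :
    Xfull α θ p = (fun δ : ℕ → Delta θ p => ∑' n, (δ n : ℂ) * α ^ n) ''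
      ({δ | (δ 0 : ℂ) = 0} ∩ {δ | GRC θ (fun n => (δ n : ℂ))}) := by
  ext x
  constructor
  · rintro ⟨δ, ⟨h0, hmem, hgrc⟩, rfl⟩
    exact ⟨fun n => ⟨δ n, hmem n⟩, ⟨h0, hgrc⟩, rfl⟩
  · rintro ⟨δ, ⟨h0, hgrc⟩, rfl⟩
    exact ⟨fun n => δ n, ⟨h0, fun n => (δ n).2, hgrc⟩, rfl⟩

theorem Xfull_isClosed_general (α : ℂ) (θ : ℝ) (p : ℕ) (hα : ‖α‖ < 1) :
    IsClosed (Xfull α θ p) := by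
  have := (Delta_finite θ p).to_subtype
  have hS : IsClosed ({δ : ℕ → Delta θ p | (δ 0 : ℂ) = 0} ∩ {δ | GRC θ (fun n => (δ n : ℂ))}) :=
    (isClosed_eq (by fun_prop) continuous_const).inter (isClosed_setOf_grc θ _)
  rw [Xfull_eq_image]
  exact (hS.isCompact.image
    (continuous_tsum_coe_mul_pow (fun _ => norm_le_one_of_mem_Delta) hα)).isClosed

/-- X_{α,θ} is a closed subset of ℂ. -/
theorem Xfull_isClosed (α : ℂ) (θ : ℝ) (p : ℕ) (q : ℤ) (hp : 0 < p)
    (hθ : θ = 2 * Real.pi * (q : ℝ) / (p : ℝ)) (hα : ‖α‖ < 1) :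
    IsClosed (Xfull α θ p) :=
  Xfull_isClosed_general α θ p hα
end

section
/- X_{α,θ} = ⋃_{l=0}^{p-1} (e^{iθ})^l K_{α,θ}, where K_{α,θ} is the attractor of the IFS {ψ₁(z)=αz, ψ₂(z)=α e^{iθ} z + α}. -/
open Complex

/-!
Composing `ψ₁ z = α z` and `ψ₂ z = α e^{iθ} z + α` along a word `b₀ b₁ ⋯ b_{N-1}` gives
`∑_{n ≤ N} dₙ αⁿ + α^N e^{ikθ} z`, where `d` is the revolving sequence with a nonzero digit
at `n + 1` exactly when the `n`-th map is `ψ₂`, its nonzero digits being `1, e^{iθ}, e^{2iθ}, …`.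
As the tail tends to zero, `K` is the set of sums of these sequences: closedness of `K` gives
one inclusion, boundedness of `K` the other. A general revolving sequence is determined by its support and its
first nonzero digit `e^{ikθ}`, hence is `e^{ikθ}` times one of these.
-/

open Filter Topology

lemma norm_rot (θ : ℝ) : ‖rot θ‖ = 1 := by
  simp [rot, Complex.norm_exp_ofReal_mul_I]

lemma rot_ne_zero (θ : ℝ) : rot θ ≠ 0 := Complex.exp_ne_zero _

lemma rot_pow_eq_one {θ : ℝ} {p : ℕ} {q : ℤ} (hp : 0 < p)
    (hθ : θ = 2 * Real.pi * (q : ℝ) / (p : ℝ)) : rot θ ^ p = 1 := by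
  have hpC : (p : ℂ) ≠ 0 := by exact_mod_cast hp.ne'
  have hexp : (p : ℂ) * (θ * I) = q * (2 * Real.pi * I) := by
    rw [hθ]
    push_cast
    field_simp
  rw [rot, ← Complex.exp_nat_mul, hexp, Complex.exp_int_mul_two_pi_mul_I]

lemma rot_pow_mem_Delta {θ : ℝ} {p : ℕ} (hp : 0 < p) (hrot : rot θ ^ p = 1) (k : ℕ) :
    rot θ ^ k ∈ Delta θ p :=
  Or.inr ⟨k % p, Nat.mod_lt _ hp, pow_eq_pow_mod k hrot⟩

lemma GRC.const_mul {θ : ℝ} {δ : ℕ → ℂ} (h : GRC θ δ) (c : ℂ) : GRC θ (fun n => c * δ n) := by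
  intro j k hjk hj hk hgap
  simp only [mul_ne_zero_iff] at hj hk
  have hgap' : ∀ m, j < m → m < k → δ m = 0 := fun m h₁ h₂ =>
    (mul_eq_zero.mp (hgap m h₁ h₂)).resolve_left hj.1
  simp only [h j k hjk hj.2 hk.2 hgap']
  ring

lemma Wrev.rot_pow_mul {θ : ℝ} {p : ℕ} {δ : ℕ → ℂ} (hp : 0 < p) (hrot : rot θ ^ p = 1)
    (hw : Wrev θ p δ) (s : ℕ) : Wrev θ p (fun n => rot θ ^ s * δ n) := by
  obtain ⟨h0, hdig, hgrc⟩ := hw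
  refine ⟨by simp [h0], fun n => ?_, hgrc.const_mul _⟩
  rcases hdig n with h | ⟨k, -, h⟩
  · simp [h, Delta]
  · simpa only [h, ← pow_add] using rot_pow_mem_Delta hp hrot (s + k)

lemma exists_last_of_exists_lt {P : ℕ → Prop} {n : ℕ} (h : ∃ m < n, P m) :
    ∃ m < n, P m ∧ ∀ l, m < l → l < n → ¬P l := by
  classical
  obtain ⟨m₀, hm₀n, hm₀⟩ := h
  have hle := Nat.findGreatest_le (P := P) (n - 1)
  exact ⟨Nat.findGreatest P (n - 1), by omega, Nat.findGreatest_spec (by omega) hm₀,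
    fun l h₁ h₂ => Nat.findGreatest_is_greatest h₁ (by omega)⟩

lemma GRC.ext {θ : ℝ} {δ δ' : ℕ → ℂ} (h : GRC θ δ) (h' : GRC θ δ')
    (hsupp : ∀ n, δ n = 0 ↔ δ' n = 0)
    (hfirst : ∀ n, δ n ≠ 0 → (∀ m < n, δ m = 0) → δ n = δ' n) : δ = δ' := by
  funext n
  induction n using Nat.strong_induction_on with
  | _ n ih =>
    by_cases hn : δ n = 0
    · rw [hn, ((hsupp n).mp hn)]
    by_cases hprev : ∃ m < n, δ m ≠ 0
    · obtain ⟨m, hmn, hm, hgap⟩ := exists_last_of_exists_lt hprev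
      simp only [not_not] at hgap
      have hn' : δ' n ≠ 0 := fun h0 => hn ((hsupp n).mpr h0)
      have hm' : δ' m ≠ 0 := fun h0 => hm ((hsupp m).mpr h0)
      rw [h m n hmn hm hn hgap,
        h' m n hmn hm' hn' (fun l h₁ h₂ => (hsupp l).mp (hgap l h₁ h₂)), ih m hmn]
    · push Not at hprev
      exact hfirst n hn hprev

noncomputable def dig (θ : ℝ) (b : ℕ → Bool) : ℕ → ℂ
  | 0 => 0
  | n + 1 => if b n then rot θ ^ Nat.count (fun m => b m) n else 0

section dig

variable {θ : ℝ} {b : ℕ → Bool}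

lemma dig_succ_of_true {n : ℕ} (h : b n = true) :
    dig θ b (n + 1) = rot θ ^ Nat.count (fun m => b m) n := by
  simp [dig, h]

lemma dig_succ_of_false {n : ℕ} (h : b n = false) : dig θ b (n + 1) = 0 := by
  simp [dig, h]

lemma dig_succ_eq_zero_iff {n : ℕ} : dig θ b (n + 1) = 0 ↔ b n = false := by
  cases h : b n
  · simp [dig_succ_of_false h]
  · simp [dig_succ_of_true h, rot_ne_zero]

lemma norm_dig_le_one (n : ℕ) : ‖dig θ b n‖ ≤ 1 := by
  rcases n with _ | n
  · simp [dig]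
  cases h : b n
  · simp [dig_succ_of_false h]
  · simp [dig_succ_of_true h, norm_rot]

lemma dig_mem_Delta {p : ℕ} (hp : 0 < p) (hrot : rot θ ^ p = 1) (n : ℕ) :
    dig θ b n ∈ Delta θ p := by
  rcases n with _ | n
  · exact Or.inl rfl
  cases h : b n
  · exact Or.inl (dig_succ_of_false h)
  · rw [dig_succ_of_true h]
    exact rot_pow_mem_Delta hp hrot _

lemma dig_GRC : GRC θ (dig θ b) := by
  rintro (_ | j) (_ | k) hjk hj hk hgap
  · exact absurd rfl hj
  · exact absurd rfl hj
  · omega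
  have hbj : b j = true := by simpa [dig_succ_eq_zero_iff] using hj
  have hbk : b k = true := by simpa [dig_succ_eq_zero_iff] using hk
  have hgap' : ∀ l, j < l → l < k → b l = false := fun l h₁ h₂ =>
    dig_succ_eq_zero_iff.mp (hgap (l + 1) (by omega) (by omega))
  have hcount : Nat.count (fun m => b m) k = Nat.count (fun m => b m) j + 1 := by
    obtain ⟨d, rfl⟩ : ∃ d, k = j + 1 + d := ⟨k - (j + 1), by omega⟩
    have hgap_count : Nat.count (fun l => b (j + 1 + l)) d = 0 :=
      Nat.count_iff_forall_not.mpr fun l hl => by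
        simpa using hgap' (j + 1 + l) (by omega) (by omega)
    rw [Nat.count_add, Nat.count_succ, if_pos hbj, hgap_count]
  rw [dig_succ_of_true hbj, dig_succ_of_true hbk, hcount, pow_succ, mul_comm]

lemma dig_Wrev {p : ℕ} (hp : 0 < p) (hrot : rot θ ^ p = 1) : Wrev θ p (dig θ b) :=
  ⟨rfl, dig_mem_Delta hp hrot, dig_GRC⟩

end dig

lemma Wrev.exists_eq_rot_pow_mul_dig {θ : ℝ} {p : ℕ} {δ : ℕ → ℂ} (hp : 0 < p)
    (hw : Wrev θ p δ) : ∃ k < p, ∃ b : ℕ → Bool, δ = fun n => rot θ ^ k * dig θ b n := by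
  classical
  obtain ⟨h0, hdig, hgrc⟩ := hw
  set b : ℕ → Bool := fun n => decide (δ (n + 1) ≠ 0)
  have hsupp : ∀ n, δ n = 0 ↔ dig θ b n = 0 := by
    rintro (_ | n)
    · simp [h0, dig]
    · simp [dig_succ_eq_zero_iff, b]
  by_cases hzero : ∀ n, δ n = 0
  · refine ⟨0, hp, b, funext fun n => ?_⟩
    rw [hzero n, eq_comm, pow_zero, one_mul, ← hsupp, hzero n]
  push Not at hzero
  set j := Nat.find hzero
  rcases hdig j with hj | ⟨k, hk, hj⟩
  · exact absurd hj (Nat.find_spec hzero)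
  refine ⟨k, hk, b, hgrc.ext (dig_GRC.const_mul _) (fun n => by simp [hsupp n, rot_ne_zero]) ?_⟩
  intro n hn hfirst
  have hnj : n = j :=
    le_antisymm (not_lt.mp fun h => Nat.find_spec hzero (hfirst j h)) (Nat.find_min' hzero hn)
  obtain ⟨m, rfl⟩ : ∃ m, n = m + 1 := Nat.exists_eq_succ_of_ne_zero fun h => hn (h ▸ h0)
  have hbm : b m = true := by simpa [b] using hn
  have hcount : Nat.count (fun l => b l) m = 0 :=
    Nat.count_iff_forall_not.mpr fun l hl => by simpa [b] using hfirst (l + 1) (by omega)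
  rw [hnj, hj, ← hnj, dig_succ_of_true hbm, hcount, pow_zero, mul_one]

noncomputable def ifsMap (α : ℂ) (θ : ℝ) : Bool → ℂ → ℂ
  | false, z => α * z
  | true, z => α * rot θ * z + α

/-- `ifsIter α θ b N = ifsMap (b 0) ∘ ⋯ ∘ ifsMap (b (N - 1))`. -/
noncomputable def ifsIter (α : ℂ) (θ : ℝ) (b : ℕ → Bool) : ℕ → ℂ → ℂ
  | 0, z => z
  | N + 1, z => ifsIter α θ b N (ifsMap α θ (b N) z)

section ifs

variable {α : ℂ} {θ : ℝ}

lemma ifsIter_eq (b : ℕ → Bool) (N : ℕ) (z : ℂ) :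
    ifsIter α θ b N z = ∑ n ∈ Finset.range (N + 1), dig θ b n * α ^ n
      + α ^ N * rot θ ^ Nat.count (fun m => b m) N * z := by
  induction N generalizing z with
  | zero => simp [ifsIter, dig]
  | succ N ih =>
    rw [ifsIter, ih, Finset.sum_range_succ _ (N + 1), Nat.count_succ]
    cases h : b N
    · simp only [ifsMap, dig_succ_of_false h, Bool.false_eq_true, if_false]
      ring
    · simp only [ifsMap, dig_succ_of_true h, if_true]
      ring

lemma summable_dig_mul_pow (hα : ‖α‖ < 1) (b : ℕ → Bool) :
    Summable fun n => dig θ b n * α ^ n := by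
  refine Summable.of_norm_bounded (summable_geometric_of_lt_one (norm_nonneg α) hα) fun n => ?_
  rw [norm_mul, norm_pow]
  exact mul_le_of_le_one_left (by positivity) (norm_dig_le_one n)

lemma tendsto_ifsIter (hα : ‖α‖ < 1) (b : ℕ → Bool) {z : ℕ → ℂ} {C : ℝ} (hz : ∀ N, ‖z N‖ ≤ C) :
    Tendsto (fun N => ifsIter α θ b N (z N)) atTop (𝓝 (∑' n, dig θ b n * α ^ n)) := by
  have hpartial : Tendsto (fun N => ∑ n ∈ Finset.range (N + 1), dig θ b n * α ^ n) atTop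
      (𝓝 (∑' n, dig θ b n * α ^ n)) :=
    (summable_dig_mul_pow hα b).hasSum.tendsto_sum_nat.comp (tendsto_add_atTop_nat 1)
  have htail : Tendsto (fun N => α ^ N * rot θ ^ Nat.count (fun m => b m) N * z N) atTop (𝓝 0) := by
    refine squeeze_zero_norm (fun N => ?_)
      (by simpa using (tendsto_pow_atTop_nhds_zero_of_lt_one (norm_nonneg α) hα).mul_const C)
    rw [norm_mul, norm_mul, norm_pow, norm_pow, norm_rot, one_pow, mul_one]
    exact mul_le_mul_of_nonneg_left (hz N) (by positivity)
  simpa only [ifsIter_eq, add_zero] using hpartial.add htail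

variable {K : Set ℂ} (hK : K = (fun z => α * z) '' K ∪ (fun z => α * rot θ * z + α) '' K)
include hK

lemma ifsIter_mem (b : ℕ → Bool) (N : ℕ) {z : ℂ} (hz : z ∈ K) : ifsIter α θ b N z ∈ K := by
  induction N generalizing z with
  | zero => exact hz
  | succ N ih =>
    refine ih ?_
    rw [hK]
    cases b N
    exacts [Or.inl ⟨z, hz, rfl⟩, Or.inr ⟨z, hz, rfl⟩]

lemma exists_ifsMap_eq {z : ℂ} (hz : z ∈ K) : ∃ c, ∃ w ∈ K, ifsMap α θ c w = z := by
  rw [hK] at hz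
  rcases hz with ⟨w, hw, rfl⟩ | ⟨w, hw, rfl⟩
  exacts [⟨false, w, hw, rfl⟩, ⟨true, w, hw, rfl⟩]

lemma tsum_dig_mul_pow_mem (hα : ‖α‖ < 1) (hKne : K.Nonempty) (hKc : IsCompact K)
    (b : ℕ → Bool) : ∑' n, dig θ b n * α ^ n ∈ K := by
  obtain ⟨z, hz⟩ := hKne
  exact hKc.isClosed.mem_of_tendsto (tendsto_ifsIter hα b (fun _ => le_rfl))
    (Eventually.of_forall fun N => ifsIter_mem hK b N hz)

lemma exists_tsum_dig_mul_pow_eq (hα : ‖α‖ < 1) (hKc : IsCompact K) {x : ℂ} (hx : x ∈ K) :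
    ∃ b : ℕ → Bool, ∑' n, dig θ b n * α ^ n = x := by
  choose c w hwK hw using fun z : K => exists_ifsMap_eq hK z.2
  let orbit : ℕ → K := fun N => Nat.rec ⟨x, hx⟩ (fun _ z => ⟨w z, hwK z⟩) N
  let b : ℕ → Bool := fun N => c (orbit N)
  have hx_eq : ∀ N, ifsIter α θ b N (orbit N).1 = x := by
    intro N
    induction N with
    | zero => rfl
    | succ N ih => rw [ifsIter, ← ih]; exact congrArg _ (hw (orbit N))
  obtain ⟨C, hC⟩ := hKc.isBounded.exists_norm_le
  refine ⟨b, tendsto_nhds_unique (tendsto_ifsIter hα b fun N => hC _ (orbit N).2) ?_⟩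
  simp only [hx_eq, tendsto_const_nhds]

lemma eq_range_tsum_dig_mul_pow (hα : ‖α‖ < 1) (hKne : K.Nonempty) (hKc : IsCompact K) :
    K = Set.range fun b => ∑' n, dig θ b n * α ^ n :=
  Set.Subset.antisymm (fun _ hx => exists_tsum_dig_mul_pow_eq hK hα hKc hx)
    (Set.range_subset_iff.mpr (tsum_dig_mul_pow_mem hK hα hKne hKc))

end ifs

theorem Xfull_eq_union_rot_attractor_general (α : ℂ) (θ : ℝ) (p : ℕ) (q : ℤ) (hp : 0 < p)
    (hθ : θ = 2 * Real.pi * (q : ℝ) / (p : ℝ)) (hα : ‖α‖ < 1)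
    (K : Set ℂ) (hKne : K.Nonempty) (hKc : IsCompact K)
    (hK : K = (fun z => α * z) '' K ∪ (fun z => α * rot θ * z + α) '' K) :
    Xfull α θ p = ⋃ l ∈ Finset.range p, (fun z => rot θ ^ l * z) '' K := by
  have hrot : rot θ ^ p = 1 := rot_pow_eq_one hp hθ
  have htsum : ∀ (c : ℂ) (δ : ℕ → ℂ), ∑' n, c * δ n * α ^ n = c * ∑' n, δ n * α ^ n := by
    simp only [mul_assoc, tsum_mul_left, implies_true]
  rw [eq_range_tsum_dig_mul_pow hK hα hKne hKc]
  ext x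
  simp only [Xfull, Set.mem_ofPred_eq, Set.mem_iUnion, Finset.mem_range, Set.mem_image,
    Set.exists_range_iff]
  constructor
  · rintro ⟨δ, hw, rfl⟩
    obtain ⟨k, hk, b, rfl⟩ := hw.exists_eq_rot_pow_mul_dig hp
    exact ⟨k, hk, b, (htsum _ _).symm⟩
  · rintro ⟨l, -, b, rfl⟩
    exact ⟨_, (dig_Wrev hp hrot).rot_pow_mul hp hrot l, (htsum _ _).symm⟩

/-- X_{α,θ} = ⋃_{l=0}^{p-1} (e^{iθ})^l K_{α,θ}. -/
theorem Xfull_eq_union_rot_attractor (α : ℂ) (θ : ℝ) (p : ℕ) (q : ℤ) (hp : 0 < p)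
    (hq : Nat.Coprime q.natAbs p)
    (hθ : θ = 2 * Real.pi * (q : ℝ) / (p : ℝ)) (hα0 : 0 < ‖α‖) (hα : ‖α‖ < 1)
    (K : Set ℂ) (hKne : K.Nonempty) (hKc : IsCompact K)
    (hK : K = (fun z => α * z) '' K ∪ (fun z => α * rot θ * z + α) '' K) :
    Xfull α θ p = ⋃ l ∈ Finset.range p, (fun z => rot θ ^ l * z) '' K :=
  Xfull_eq_union_rot_attractor_general α θ p q hp hθ hα K hKne hKc hK
end
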